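/- arXiv:1006.2260 — 6 statements merged into one kernel-verified Lean document; each statement's English description precedes it below -/
import Mathlib

section
/- Let X be a set, Y a real vector space, 𝒜 a lattice of subsets of X, and Φ : 𝒜 → Y. Then Φ is modular if and only if for every finite collection A₁,…,A_N ∈ 𝒜 one has Φ(⋃_{n=1}^N A_n) = Σ_{∅≠b⊆{1,…,N}} ν(b) Φ(⋂_{n∈b} A_n), and this in turn holds if and only if for every finite collection A₁,…,A_N ∈ 𝒜 one has Φ(⋂_{n=1}^N A_n) = Σ_{∅≠b⊆{1,…,N}} ν(b) Φ(⋃_{n∈b} A_n). -/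
open Finset Set

/-- `ν(b) = (−1)^{1+|b|}` for a finite set `b` of natural numbers. -/
noncomputable def nu (b : Finset ℕ) : ℝ := (-1 : ℝ) ^ (1 + b.card)

/-- A `∩`-semilattice of sets: a nonempty family closed under finite intersections. -/
def IsCapSemilattice {X : Type*} (𝒜 : Set (Set X)) : Prop :=
  𝒜.Nonempty ∧ ∀ A ∈ 𝒜, ∀ B ∈ 𝒜, A ∩ B ∈ 𝒜

/-- A `∪`-semilattice of sets: a nonempty family closed under finite unions. -/
def IsCupSemilattice {X : Type*} (𝒜 : Set (Set X)) : Prop :=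
  𝒜.Nonempty ∧ ∀ A ∈ 𝒜, ∀ B ∈ 𝒜, A ∪ B ∈ 𝒜

/-- A lattice of sets: nonempty, closed under finite intersections and finite unions. -/
def IsSetLattice {X : Type*} (𝒜 : Set (Set X)) : Prop :=
  𝒜.Nonempty ∧ (∀ A ∈ 𝒜, ∀ B ∈ 𝒜, A ∩ B ∈ 𝒜) ∧ ∀ A ∈ 𝒜, ∀ B ∈ 𝒜, A ∪ B ∈ 𝒜

/-- A ring of sets: nonempty, closed under finite unions and set differences. -/
def IsSetRing0 {X : Type*} (𝒜 : Set (Set X)) : Prop :=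
  𝒜.Nonempty ∧ (∀ A ∈ 𝒜, ∀ B ∈ 𝒜, A ∪ B ∈ 𝒜) ∧ ∀ A ∈ 𝒜, ∀ B ∈ 𝒜, A \ B ∈ 𝒜

/-- An algebra of sets: a ring of sets containing the whole space. -/
def IsSetAlgebra0 {X : Type*} (𝒜 : Set (Set X)) : Prop :=
  IsSetRing0 𝒜 ∧ Set.univ ∈ 𝒜

/-- A set function is modular on `𝒜` if `Φ(A∪B) + Φ(A∩B) = Φ(A) + Φ(B)` for `A, B ∈ 𝒜`. -/
def Modular {X Y : Type*} [AddCommGroup Y] (𝒜 : Set (Set X)) (Φ : Set X → Y) : Prop :=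
  ∀ A ∈ 𝒜, ∀ B ∈ 𝒜, Φ (A ∪ B) + Φ (A ∩ B) = Φ A + Φ B

/-- Strongly additive: modular, and vanishing at `∅` whenever `∅` belongs to the family. -/
def StronglyAdditive {X Y : Type*} [AddCommGroup Y] (𝒜 : Set (Set X)) (Φ : Set X → Y) : Prop :=
  Modular 𝒜 Φ ∧ (∅ ∈ 𝒜 → Φ ∅ = 0)

/-- Semi-modularity on a `∩`-semilattice: whenever `A₁,…,A_N ∈ 𝒜` and `⋃ A_n ∈ 𝒜`,
`Φ(⋃_{n} A_n) = Σ_{∅≠b⊆{1,…,N}} ν(b) Φ(⋂_{n∈b} A_n)`. -/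
def CapSemiModular {X Y : Type*} [AddCommGroup Y] [Module ℝ Y]
    (𝒜 : Set (Set X)) (Φ : Set X → Y) : Prop :=
  ∀ N : ℕ, 0 < N → ∀ A : ℕ → Set X,
    (∀ n ∈ Finset.range N, A n ∈ 𝒜) → (⋃ n ∈ Finset.range N, A n) ∈ 𝒜 →
    Φ (⋃ n ∈ Finset.range N, A n) =
      ∑ b ∈ (Finset.range N).powerset.filter (· ≠ ∅), nu b • Φ (⋂ n ∈ b, A n)

/-- Semi-modularity on a `∪`-semilattice: whenever `A₁,…,A_N ∈ 𝒜` and `⋂ A_n ∈ 𝒜`,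
`Φ(⋂_{n} A_n) = Σ_{∅≠b⊆{1,…,N}} ν(b) Φ(⋃_{n∈b} A_n)`. -/
def CupSemiModular {X Y : Type*} [AddCommGroup Y] [Module ℝ Y]
    (𝒜 : Set (Set X)) (Φ : Set X → Y) : Prop :=
  ∀ N : ℕ, 0 < N → ∀ A : ℕ → Set X,
    (∀ n ∈ Finset.range N, A n ∈ 𝒜) → (⋂ n ∈ Finset.range N, A n) ∈ 𝒜 →
    Φ (⋂ n ∈ Finset.range N, A n) =
      ∑ b ∈ (Finset.range N).powerset.filter (· ≠ ∅), nu b • Φ (⋃ n ∈ b, A n)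

/-- A set function on a semilattice is semi-modular if it satisfies the appropriate
semi-modularity condition for the kind(s) of semilattice its domain is. -/
def SemiModular {X Y : Type*} [AddCommGroup Y] [Module ℝ Y]
    (𝒜 : Set (Set X)) (Φ : Set X → Y) : Prop :=
  (IsCapSemilattice 𝒜 → CapSemiModular 𝒜 Φ) ∧ (IsCupSemilattice 𝒜 → CupSemiModular 𝒜 Φ)

/-- Semi-additive: admits a semi-modular extension to `𝒜 ∪ {∅}` vanishing at `∅`. -/
def SemiAdditive {X Y : Type*} [AddCommGroup Y] [Module ℝ Y]
    (𝒜 : Set (Set X)) (Φ : Set X → Y) : Prop :=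
  ∃ Ψ : Set X → Y, (∀ A ∈ 𝒜, Ψ A = Φ A) ∧ Ψ ∅ = 0 ∧ SemiModular (insert ∅ 𝒜) Ψ

set_option linter.unusedTactic false in
lemma biUnion_mem_aux {X : Type*} {𝒜 : Set (Set X)}
    (hcup : ∀ A ∈ 𝒜, ∀ B ∈ 𝒜, A ∪ B ∈ 𝒜) :
    ∀ N : ℕ, 0 < N → ∀ A : ℕ → Set X, (∀ n ∈ Finset.range N, A n ∈ 𝒜) →
      (⋃ n ∈ Finset.range N, A n) ∈ 𝒜 := by
  intro N
  induction N with
  | zero => intro h; omega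
  | succ N ih =>
    intro _ A hA
    rcases Nat.eq_zero_or_pos N with hN | hN
    · subst hN
      simpa using hA 0 (by simp)
    · rw [Finset.range_add_one, Finset.set_biUnion_insert]
      exact hcup _ (hA N (by simp)) _
        (ih hN A fun n hn => hA n (Finset.mem_range.mpr ((Finset.mem_range.mp hn).trans (Nat.lt_succ_self N))))

lemma union_formula_aux {X Y : Type*} [AddCommGroup Y] [Module ℝ Y] {𝒜 : Set (Set X)}
    (hcap : ∀ A ∈ 𝒜, ∀ B ∈ 𝒜, A ∩ B ∈ 𝒜) (hcup : ∀ A ∈ 𝒜, ∀ B ∈ 𝒜, A ∪ B ∈ 𝒜)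
    {Φ : Set X → Y} (hΦ : ∀ A ∈ 𝒜, ∀ B ∈ 𝒜, Φ (A ∪ B) + Φ (A ∩ B) = Φ A + Φ B) :
    ∀ N : ℕ, 0 < N → ∀ A : ℕ → Set X, (∀ n ∈ Finset.range N, A n ∈ 𝒜) →
      Φ (⋃ n ∈ Finset.range N, A n) =
        ∑ b ∈ (Finset.range N).powerset.filter (· ≠ ∅), nu b • Φ (⋂ n ∈ b, A n) := by
  intro N
  induction N with
  | zero => intro h; omega
  | succ N ih =>
    intro _ A hA
    rcases Nat.eq_zero_or_pos N with hN | hN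
    · subst hN
      have hpow : (Finset.range 1).powerset.filter (· ≠ ∅) = {({0} : Finset ℕ)} := by decide
      rw [hpow]
      simp [nu]
    · have hA' : ∀ n ∈ Finset.range N, A n ∈ 𝒜 := fun n hn =>
        hA n (Finset.mem_range.mpr ((Finset.mem_range.mp hn).trans (Nat.lt_succ_self N)))
      have hU : (⋃ n ∈ Finset.range N, A n) ∈ 𝒜 := biUnion_mem_aux hcup N hN A hA'
      have hAN : A N ∈ 𝒜 := hA N (by simp)
      -- split union
      rw [Finset.range_add_one, Finset.set_biUnion_insert]
      have hmod := hΦ _ hU _ hAN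
      have hinter : (⋃ n ∈ Finset.range N, A n) ∩ A N = ⋃ n ∈ Finset.range N, (A n ∩ A N) := by
        ext x; simp [and_comm]
      -- main formula using modularity
      have key : Φ (A N ∪ ⋃ n ∈ Finset.range N, A n)
          = Φ (⋃ n ∈ Finset.range N, A n) + Φ (A N) - Φ (⋃ n ∈ Finset.range N, (A n ∩ A N)) := by
        rw [Set.union_comm, ← hinter]
        exact eq_sub_of_add_eq hmod
      rw [key, ih hN A hA', ih hN (fun n => A n ∩ A N) (fun n hn => hcap _ (hA' n hn) _ hAN)]
      -- now rewrite RHS sum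
      have hNnotmem : N ∉ Finset.range N := by simp
      have hsplit : (insert N (Finset.range N)).powerset.filter (· ≠ ∅)
          = (Finset.range N).powerset.filter (· ≠ ∅) ∪ (Finset.range N).powerset.image (insert N) := by
        rw [Finset.powerset_insert, Finset.filter_union]
        congr 1
        rw [Finset.filter_image]
        congr 1
        apply Finset.filter_true_of_mem
        intro b _
        exact Finset.insert_ne_empty _ _
      have hdisj : Disjoint ((Finset.range N).powerset.filter (· ≠ ∅))
          ((Finset.range N).powerset.image (insert N)) := by
        rw [Finset.disjoint_left]
        rintro b hb hb'
        simp only [Finset.mem_filter, Finset.mem_powerset] at hb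
        rcases Finset.mem_image.mp hb' with ⟨c, hc, rfl⟩
        exact hNnotmem (hb.1 (Finset.mem_insert_self _ _))
      rw [hsplit, Finset.sum_union hdisj]
      have hinj : ∀ b ∈ (Finset.range N).powerset, ∀ c ∈ (Finset.range N).powerset,
          insert N b = insert N c → b = c := by
        intro b hb c hc h
        have hb' := Finset.mem_powerset.mp hb
        have hc' := Finset.mem_powerset.mp hc
        have : (insert N b).erase N = (insert N c).erase N := by rw [h]
        rwa [Finset.erase_insert (fun h => hNnotmem (hb' h)),
          Finset.erase_insert (fun h => hNnotmem (hc' h))] at this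
      rw [Finset.sum_image hinj]
      -- pull ∅ out of the second sum
      have hempty : (∅ : Finset ℕ) ∈ (Finset.range N).powerset := by simp
      rw [← Finset.add_sum_erase _ _ hempty]
      have herase : ((Finset.range N).powerset).erase ∅ = (Finset.range N).powerset.filter (· ≠ ∅) := by
        rw [Finset.filter_ne']
      rw [herase]
      have hterm : nu (insert N ∅) • Φ (⋂ n ∈ insert N (∅ : Finset ℕ), A n) = Φ (A N) := by
        simp [nu]
      rw [hterm]
      have hcongr : ∀ b ∈ (Finset.range N).powerset.filter (· ≠ ∅),
          nu (insert N b) • Φ (⋂ n ∈ insert N b, A n)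
            = - (nu b • Φ (⋂ n ∈ b, (A n ∩ A N))) := by
        intro b hb
        simp only [Finset.mem_filter, Finset.mem_powerset] at hb
        have hNb : N ∉ b := fun h => hNnotmem (hb.1 h)
        obtain ⟨m, hm⟩ := Finset.nonempty_iff_ne_empty.mpr hb.2
        have h1 : nu (insert N b) = - nu b := by
          simp [nu, Finset.card_insert_of_notMem hNb, pow_succ]
          ring
        have h2 : (⋂ n ∈ insert N b, A n) = ⋂ n ∈ b, (A n ∩ A N) := by
          ext x
          simp only [Finset.set_biInter_insert, Set.mem_inter_iff, Set.mem_iInter]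
          constructor
          · rintro ⟨hx, h⟩ n hn; exact ⟨h n hn, hx⟩
          · intro h; exact ⟨(h m hm).2, fun n hn => (h n hn).1⟩
        rw [h1, h2, neg_smul]
      rw [Finset.sum_congr rfl hcongr, Finset.sum_neg_distrib]
      abel

lemma inter_formula_aux {X Y : Type*} [AddCommGroup Y] [Module ℝ Y] {𝒜 : Set (Set X)}
    (hcap : ∀ A ∈ 𝒜, ∀ B ∈ 𝒜, A ∩ B ∈ 𝒜) (hcup : ∀ A ∈ 𝒜, ∀ B ∈ 𝒜, A ∪ B ∈ 𝒜)
    {Φ : Set X → Y} (hΦ : ∀ A ∈ 𝒜, ∀ B ∈ 𝒜, Φ (A ∪ B) + Φ (A ∩ B) = Φ A + Φ B) :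
    ∀ N : ℕ, 0 < N → ∀ A : ℕ → Set X, (∀ n ∈ Finset.range N, A n ∈ 𝒜) →
      Φ (⋂ n ∈ Finset.range N, A n) =
        ∑ b ∈ (Finset.range N).powerset.filter (· ≠ ∅), nu b • Φ (⋃ n ∈ b, A n) := by
  intro N hN A hA
  set 𝒜' : Set (Set X) := compl '' 𝒜 with h𝒜'
  set Φ' : Set X → Y := fun S => Φ Sᶜ with hΦ'
  have hcap' : ∀ A ∈ 𝒜', ∀ B ∈ 𝒜', A ∩ B ∈ 𝒜' := by
    rintro _ ⟨A, hA, rfl⟩ _ ⟨B, hB, rfl⟩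
    exact ⟨A ∪ B, hcup A hA B hB, by simp [Set.compl_union]⟩
  have hcup' : ∀ A ∈ 𝒜', ∀ B ∈ 𝒜', A ∪ B ∈ 𝒜' := by
    rintro _ ⟨A, hA, rfl⟩ _ ⟨B, hB, rfl⟩
    exact ⟨A ∩ B, hcap A hA B hB, by simp [Set.compl_inter]⟩
  have hmod' : ∀ A ∈ 𝒜', ∀ B ∈ 𝒜', Φ' (A ∪ B) + Φ' (A ∩ B) = Φ' A + Φ' B := by
    rintro _ ⟨A, hA, rfl⟩ _ ⟨B, hB, rfl⟩
    simp only [hΦ', ← Set.compl_inter, ← Set.compl_union, compl_compl]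
    rw [add_comm]
    exact hΦ A hA B hB
  have := union_formula_aux hcap' hcup' hmod' N hN (fun n => (A n)ᶜ)
    (fun n hn => ⟨A n, hA n hn, rfl⟩)
  simp only [hΦ', Set.compl_iUnion, Set.compl_iInter, compl_compl] at this
  convert this using 2 <;> simp [Set.compl_iUnion, compl_compl]

set_option linter.unreachableTactic false in
lemma modular_of_union_formula_aux {X Y : Type*} [AddCommGroup Y] [Module ℝ Y]
    {Φ : Set X → Y} (A B : Set X)
    (h : Φ (⋃ n ∈ Finset.range 2, (fun n => if n = 0 then A else B) n) =
      ∑ b ∈ (Finset.range 2).powerset.filter (· ≠ ∅),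
        nu b • Φ (⋂ n ∈ b, (fun n => if n = 0 then A else B) n)) :
    Φ (A ∪ B) + Φ (A ∩ B) = Φ A + Φ B := by
  have hset : (Finset.range 2).powerset.filter (· ≠ ∅)
      = ({({0}), ({1}), ({0, 1})} : Finset (Finset ℕ)) := by decide
  rw [hset, Finset.sum_insert (by decide), Finset.sum_insert (by decide),
    Finset.sum_singleton, show Finset.range 2 = {0, 1} from by decide] at h
  simp only [Finset.set_biUnion_insert, Finset.set_biUnion_singleton,
    Finset.set_biInter_insert, Finset.set_biInter_singleton, if_pos rfl] at h
  norm_num [nu] at h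
  rw [h]
  abel

set_option linter.unreachableTactic false in
lemma modular_of_inter_formula_aux {X Y : Type*} [AddCommGroup Y] [Module ℝ Y]
    {Φ : Set X → Y} (A B : Set X)
    (h : Φ (⋂ n ∈ Finset.range 2, (fun n => if n = 0 then A else B) n) =
      ∑ b ∈ (Finset.range 2).powerset.filter (· ≠ ∅),
        nu b • Φ (⋃ n ∈ b, (fun n => if n = 0 then A else B) n)) :
    Φ (A ∪ B) + Φ (A ∩ B) = Φ A + Φ B := by
  have hset : (Finset.range 2).powerset.filter (· ≠ ∅)
      = ({({0}), ({1}), ({0, 1})} : Finset (Finset ℕ)) := by decide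
  rw [hset, Finset.sum_insert (by decide), Finset.sum_insert (by decide),
    Finset.sum_singleton, show Finset.range 2 = {0, 1} from by decide] at h
  simp only [Finset.set_biUnion_insert, Finset.set_biUnion_singleton,
    Finset.set_biInter_insert, Finset.set_biInter_singleton, if_pos rfl] at h
  norm_num [nu] at h
  rw [h]
  abel

/-- On a lattice of sets, a set function is modular iff it satisfies the
inclusion–exclusion formula over intersections, iff it satisfies the dual formula over unions. -/
theorem stmt0 {X Y : Type*} [AddCommGroup Y] [Module ℝ Y]
    (𝒜 : Set (Set X)) (h𝒜 : IsSetLattice 𝒜) (Φ : Set X → Y) :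
    (Modular 𝒜 Φ ↔
      ∀ N : ℕ, 0 < N → ∀ A : ℕ → Set X, (∀ n ∈ Finset.range N, A n ∈ 𝒜) →
        Φ (⋃ n ∈ Finset.range N, A n) =
          ∑ b ∈ (Finset.range N).powerset.filter (· ≠ ∅), nu b • Φ (⋂ n ∈ b, A n)) ∧
    (Modular 𝒜 Φ ↔
      ∀ N : ℕ, 0 < N → ∀ A : ℕ → Set X, (∀ n ∈ Finset.range N, A n ∈ 𝒜) →
        Φ (⋂ n ∈ Finset.range N, A n) =
          ∑ b ∈ (Finset.range N).powerset.filter (· ≠ ∅), nu b • Φ (⋃ n ∈ b, A n)) := by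
  obtain ⟨hne, hcap, hcup⟩ := h𝒜
  have hmem : ∀ A B : Set X, A ∈ 𝒜 → B ∈ 𝒜 →
      ∀ n ∈ Finset.range 2, (fun n => if n = 0 then A else B) n ∈ 𝒜 := by
    intro A B hA hB n _
    by_cases hn : n = 0 <;> simp [hn, hA, hB]
  constructor
  · constructor
    · intro hmod N hN A hA
      exact union_formula_aux hcap hcup hmod N hN A hA
    · intro h A hA B hB
      exact modular_of_union_formula_aux A B
        (h 2 (by norm_num) _ (hmem A B hA hB))
  · constructor
    · intro hmod N hN A hA
      exact inter_formula_aux hcap hcup hmod N hN A hA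
    · intro h A hA B hB
      exact modular_of_inter_formula_aux A B
        (h 2 (by norm_num) _ (hmem A B hA hB))
end

section
/- Let 𝒜₀ be a ∩-semilattice of subsets of a set X, Y a real vector space, Φ : 𝒜₀ → Y any set function, and A₁,…,A_N ∈ 𝒜₀ with A_N ⊆ A_{N−1}. Then Σ_{∅≠b⊆{1,…,N}} ν(b) Φ(⋂_{n∈b} A_n) = Σ_{∅≠b⊆{1,…,N−1}} ν(b) Φ(⋂_{n∈b} A_n). The same holds on a ∪-semilattice with ∩ replaced by ∪ and the inclusion reversed (A_N ⊇ A_{N−1}). -/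
open Finset Set

lemma nu_insert (a : ℕ) (b : Finset ℕ) (h : a ∉ b) : nu (insert a b) = - nu b := by
  simp only [nu, Finset.card_insert_of_notMem h]
  ring

lemma aux_reduce {Y : Type*} [AddCommGroup Y] [Module ℝ Y] (N : ℕ) (hN : 2 ≤ N)
    (F : Finset ℕ → Y)
    (hF : ∀ b ⊆ Finset.range N, N - 1 ∈ b → N - 2 ∉ b → F (insert (N - 2) b) = F b) :
    ∑ b ∈ (Finset.range N).powerset.filter (· ≠ ∅), nu b • F b
      = ∑ b ∈ (Finset.range (N - 1)).powerset.filter (· ≠ ∅), nu b • F b := by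
  have hne : N - 2 ≠ N - 1 := by omega
  rw [← Finset.sum_filter_add_sum_filter_not ((Finset.range N).powerset.filter (· ≠ ∅))
      (fun b => N - 1 ∈ b)]
  have h1 : ∑ b ∈ (((Finset.range N).powerset.filter (· ≠ ∅)).filter (fun b => N - 1 ∈ b)),
      nu b • F b = 0 := by
    set S := (((Finset.range N).powerset.filter (· ≠ ∅)).filter (fun b => N - 1 ∈ b)) with hS
    have hmemS : ∀ b : Finset ℕ, b ∈ S ↔ (b ⊆ Finset.range N ∧ b ≠ ∅) ∧ N - 1 ∈ b := by
      intro b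
      simp [hS, Finset.mem_filter, Finset.mem_powerset, and_assoc]
    set g : Finset ℕ → Finset ℕ :=
      fun b => if N - 2 ∈ b then b.erase (N - 2) else insert (N - 2) b with hg
    have gmem : ∀ b ∈ S, g b ∈ S := by
      intro b hb
      rw [hmemS] at hb
      obtain ⟨⟨hbsub, hbne⟩, hb1⟩ := hb
      rw [hmemS]; simp only [hg]
      by_cases h2 : N - 2 ∈ b
      · rw [if_pos h2]
        have he : N - 1 ∈ b.erase (N - 2) := Finset.mem_erase.2 ⟨hne.symm, hb1⟩
        exact ⟨⟨(Finset.erase_subset _ _).trans hbsub, Finset.ne_empty_of_mem he⟩, he⟩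
      · rw [if_neg h2]
        have hr : N - 2 ∈ Finset.range N := Finset.mem_range.2 (by omega)
        exact ⟨⟨Finset.insert_subset hr hbsub, Finset.insert_ne_empty _ _⟩,
          Finset.mem_insert_of_mem hb1⟩
    have ginv : ∀ b, g (g b) = b := by
      intro b
      simp only [hg]
      by_cases h2 : N - 2 ∈ b
      · simp only [if_pos h2, if_neg (Finset.notMem_erase (N - 2) b), Finset.insert_erase h2]
      · simp only [if_neg h2, if_pos (Finset.mem_insert_self (N - 2) b), Finset.erase_insert h2]
    have gne : ∀ b, g b ≠ b := by
      intro b heq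
      simp only [hg] at heq
      by_cases h2 : N - 2 ∈ b
      · rw [if_pos h2] at heq
        rw [← heq] at h2
        exact Finset.notMem_erase _ _ h2
      · rw [if_neg h2] at heq
        rw [← heq] at h2
        exact h2 (Finset.mem_insert_self _ _)
    have hcancel : ∀ b ∈ S, nu b • F b + nu (g b) • F (g b) = 0 := by
      intro b hb
      rw [hmemS] at hb
      obtain ⟨⟨hbsub, hbne⟩, hb1⟩ := hb
      simp only [hg]
      by_cases h2 : N - 2 ∈ b
      · rw [if_pos h2]
        have h1e : N - 1 ∈ b.erase (N - 2) := Finset.mem_erase.2 ⟨hne.symm, hb1⟩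
        have h2e : N - 2 ∉ b.erase (N - 2) := Finset.notMem_erase _ _
        have hsub : b.erase (N - 2) ⊆ Finset.range N := (Finset.erase_subset _ _).trans hbsub
        have key : F b = F (b.erase (N - 2)) := by
          rw [← hF _ hsub h1e h2e, Finset.insert_erase h2]
        have hnu : nu b = - nu (b.erase (N - 2)) := by
          conv_lhs => rw [← Finset.insert_erase h2]
          rw [nu_insert _ _ (Finset.notMem_erase _ _)]
        rw [key, hnu, neg_smul, neg_add_cancel]
      · rw [if_neg h2]
        rw [nu_insert _ _ h2, hF b hbsub hb1 h2, neg_smul, add_neg_cancel]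
    exact Finset.sum_involution (fun b _ => g b) (fun b hb => hcancel b hb)
      (fun b _ _ => gne b) (fun b hb => gmem b hb) (fun b _ => ginv b)
  have h2 : (((Finset.range N).powerset.filter (· ≠ ∅)).filter (fun b => ¬ N - 1 ∈ b))
      = (Finset.range (N - 1)).powerset.filter (· ≠ ∅) := by
    ext b
    simp only [Finset.mem_filter, Finset.mem_powerset]
    constructor
    · rintro ⟨⟨hbsub, hbne⟩, hb1⟩
      refine ⟨fun x hx => ?_, hbne⟩
      have := Finset.mem_range.1 (hbsub hx)
      have hx1 : x ≠ N - 1 := fun h => hb1 (h ▸ hx)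
      exact Finset.mem_range.2 (by omega)
    · rintro ⟨hbsub, hbne⟩
      have hsub : b ⊆ Finset.range N := hbsub.trans (Finset.range_subset_range.2 (by omega))
      refine ⟨⟨hsub, hbne⟩, fun h => ?_⟩
      have := Finset.mem_range.1 (hbsub h)
      omega
  rw [h1, h2, zero_add]

/-- If `A_N ⊆ A_{N−1}` then the inclusion–exclusion sum over `{1,…,N}`
reduces to the sum over `{1,…,N−1}` (indices `0,…,N−1` here, so `A (N−1) ⊆ A (N−2)`),
with the dual statement on a `∪`-semilattice. -/
theorem stmt3 {X Y : Type*} [AddCommGroup Y] [Module ℝ Y]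
    (𝒜₀ : Set (Set X)) (Φ : Set X → Y) (N : ℕ) (hN : 2 ≤ N)
    (A : ℕ → Set X) (hA : ∀ n ∈ Finset.range N, A n ∈ 𝒜₀) :
    (IsCapSemilattice 𝒜₀ → A (N - 1) ⊆ A (N - 2) →
      ∑ b ∈ (Finset.range N).powerset.filter (· ≠ ∅), nu b • Φ (⋂ n ∈ b, A n)
        = ∑ b ∈ (Finset.range (N - 1)).powerset.filter (· ≠ ∅), nu b • Φ (⋂ n ∈ b, A n)) ∧
    (IsCupSemilattice 𝒜₀ → A (N - 2) ⊆ A (N - 1) →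
      ∑ b ∈ (Finset.range N).powerset.filter (· ≠ ∅), nu b • Φ (⋃ n ∈ b, A n)
        = ∑ b ∈ (Finset.range (N - 1)).powerset.filter (· ≠ ∅), nu b • Φ (⋃ n ∈ b, A n)) := by
  have hne : N - 1 ∈ Finset.range N := Finset.mem_range.2 (by omega)
  constructor
  · intro _ hsub
    apply aux_reduce N hN (fun b => Φ (⋂ n ∈ b, A n))
    intro b hbsub hb1 hb2
    congr 1
    rw [Finset.set_biInter_insert]
    have : (⋂ n ∈ b, A n) ⊆ A (N - 2) :=
      (Set.iInter₂_subset (N - 1) hb1).trans hsub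
    exact Set.inter_eq_self_of_subset_right this
  · intro _ hsub
    apply aux_reduce N hN (fun b => Φ (⋃ n ∈ b, A n))
    intro b hbsub hb1 hb2
    congr 1
    rw [Finset.set_biUnion_insert]
    have hmid : A (N - 1) ⊆ ⋃ n ∈ b, A n := Set.subset_iUnion₂ (s := fun n (_ : n ∈ b) => A n) (N - 1) hb1
    have : A (N - 2) ⊆ ⋃ n ∈ b, A n := hsub.trans hmid
    exact Set.union_eq_self_of_subset_left this
end

section
/- Let 𝒜₀ be a ∩-semilattice of subsets of a set X with the property that whenever A₁,…,A_N ∈ 𝒜₀ and ⋃_{n=1}^N A_n ∈ 𝒜₀, then ⋃_{n=1}^N A_n = A_{n₀} for some 1 ≤ n₀ ≤ N. Then every set function Φ : 𝒜₀ → Y into a real vector space Y is semi-modular. -/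
open Finset Set

/-- If `𝒜₀` is a `∩`-semilattice such that any union of members of `𝒜₀`
which again belongs to `𝒜₀` must equal one of the members, then every `Y`-valued set
function on `𝒜₀` is semi-modular. -/
theorem stmt4 {X Y : Type*} [AddCommGroup Y] [Module ℝ Y]
    (𝒜₀ : Set (Set X)) (h𝒜 : IsCapSemilattice 𝒜₀)
    (hprop : ∀ N : ℕ, 0 < N → ∀ A : ℕ → Set X, (∀ n ∈ Finset.range N, A n ∈ 𝒜₀) →
      (⋃ n ∈ Finset.range N, A n) ∈ 𝒜₀ →
      ∃ n ∈ Finset.range N, (⋃ m ∈ Finset.range N, A m) = A n)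
    (Φ : Set X → Y) :
    CapSemiModular 𝒜₀ Φ := by
  intro N hN A hA hU
  obtain ⟨n₀, hn₀, hUeq⟩ := hprop N hN A hA hU
  have hsub : ∀ m ∈ Finset.range N, A m ⊆ A n₀ := by
    intro m hm
    rw [← hUeq]
    intro x hx
    exact Set.mem_biUnion hm hx
  set T := (Finset.range N).erase n₀ with hT
  have hn₀T : n₀ ∉ T := Finset.notMem_erase _ _
  have hins : insert n₀ T = Finset.range N := Finset.insert_erase hn₀
  have key : ∀ t : Finset ℕ, t ⊆ T → t.Nonempty →
      (⋂ n ∈ insert n₀ t, A n) = ⋂ n ∈ t, A n := by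
    intro t htT ⟨m, hm⟩
    rw [Finset.set_biInter_insert, Set.inter_eq_right]
    calc ⋂ n ∈ t, A n ⊆ A m := Set.biInter_subset_of_mem hm
      _ ⊆ A n₀ := hsub m (hins ▸ Finset.mem_insert_of_mem (htT hm))
  rw [hUeq, Finset.sum_filter, ← hins,
    Finset.sum_powerset_insert hn₀T]
  rw [← Finset.sum_add_distrib]
  have step : ∀ t ∈ T.powerset,
      ((if t ≠ ∅ then nu t • Φ (⋂ n ∈ t, A n) else 0) +
        if insert n₀ t ≠ ∅ then nu (insert n₀ t) • Φ (⋂ n ∈ insert n₀ t, A n) else 0)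
      = if t = ∅ then Φ (A n₀) else 0 := by
    intro t ht
    rw [Finset.mem_powerset] at ht
    rcases eq_or_ne t ∅ with rfl | hne
    · have h1 : (⋂ n ∈ insert n₀ (∅ : Finset ℕ), A n) = A n₀ := by simp
      have h2 : nu ({n₀} : Finset ℕ) = 1 := by simp [nu]
      simp [h1, h2]
    · rw [if_pos hne, if_pos (by simp), key t ht ((Finset.nonempty_iff_ne_empty).2 hne),
        if_neg hne]
      have hnu : nu (insert n₀ t) = -nu t := by
        have : (insert n₀ t).card = t.card + 1 :=
          Finset.card_insert_of_notMem (fun h => hn₀T (ht h))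
        simp only [nu, this, ← add_assoc, pow_succ]
        ring
      rw [hnu, neg_smul, add_neg_cancel]
  rw [Finset.sum_congr rfl step, Finset.sum_ite_eq' T.powerset ∅ (fun _ => Φ (A n₀)),
    if_pos (Finset.empty_mem_powerset T)]
end

section
/- Let 𝒜₀ be a semilattice of subsets of a set X, let 𝔄 be the algebra of subsets of X generated by 𝒜₀, and let P, Q : 𝔄 → ℝ be finitely additive probabilities (finitely additive, nonnegative, with P(∅)=Q(∅)=0 and P(X)=Q(X)=1). Then P and Q agree on 𝒜₀ if and only if they agree on 𝔄. -/
open Finset Set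

/-- Closed under complements and disjoint binary unions. -/
def LamClosed {X : Type*} (E : Set (Set X)) : Prop :=
  (∀ A ∈ E, Aᶜ ∈ E) ∧ ∀ A ∈ E, ∀ B ∈ E, Disjoint A B → A ∪ B ∈ E

/-- Minimal λ-like family containing `S`. -/
def lamGen {X : Type*} (S : Set (Set X)) : Set (Set X) :=
  ⋂₀ {E | S ⊆ E ∧ LamClosed E}

lemma subset_lamGen {X : Type*} (S : Set (Set X)) : S ⊆ lamGen S := by
  intro A hA E hE; exact hE.1 hA

lemma lamGen_subset {X : Type*} {S E : Set (Set X)} (h : S ⊆ E) (hE : LamClosed E) :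
    lamGen S ⊆ E := fun A hA => hA E ⟨h, hE⟩

lemma lamGen_lamClosed {X : Type*} (S : Set (Set X)) : LamClosed (lamGen S) := by
  constructor
  · intro A hA E hE; exact hE.2.1 A (hA E hE) 
  · intro A hA B hB hd E hE; exact hE.2.2 A (hA E hE) B (hB E hE) hd

lemma lamGen_step {X : Type*} {S : Set (Set X)} {C : Set X} (hC : C ∈ lamGen S)
    (hS : ∀ T ∈ S, T ∩ C ∈ lamGen S) :
    ∀ A ∈ lamGen S, A ∩ C ∈ lamGen S := by
  have key : lamGen S ⊆ {A | A ∈ lamGen S ∧ A ∩ C ∈ lamGen S} := by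
    apply lamGen_subset
    · intro T hT; exact ⟨subset_lamGen S hT, hS T hT⟩
    · constructor
      · rintro A ⟨hA, hAC⟩
        refine ⟨(lamGen_lamClosed S).1 A hA, ?_⟩
        have hCc : Cᶜ ∈ lamGen S := (lamGen_lamClosed S).1 C hC
        have hd : Disjoint (A ∩ C) Cᶜ :=
          disjoint_compl_right.mono_left Set.inter_subset_right
        have hu : (A ∩ C) ∪ Cᶜ ∈ lamGen S := (lamGen_lamClosed S).2 _ hAC _ hCc hd
        have heq : Aᶜ ∩ C = ((A ∩ C) ∪ Cᶜ)ᶜ := by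
          rw [Set.compl_union, compl_compl, Set.compl_inter]
          rw [Set.union_inter_distrib_right]
          simp [Set.inter_comm]
        rw [heq]
        exact (lamGen_lamClosed S).1 _ hu
      · rintro A ⟨hA, hAC⟩ B ⟨hB, hBC⟩ hd
        refine ⟨(lamGen_lamClosed S).2 A hA B hB hd, ?_⟩
        rw [Set.union_inter_distrib_right]
        exact (lamGen_lamClosed S).2 _ hAC _ hBC
          ((hd.mono Set.inter_subset_left Set.inter_subset_left))
  intro A hA; exact (key hA).2

lemma lamGen_inter {X : Type*} {S : Set (Set X)}
    (hpi : ∀ A ∈ S, ∀ B ∈ S, A ∩ B ∈ S) :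
    ∀ A ∈ lamGen S, ∀ B ∈ lamGen S, A ∩ B ∈ lamGen S := by
  have step1 : ∀ C ∈ S, ∀ A ∈ lamGen S, A ∩ C ∈ lamGen S := by
    intro C hC A hA
    exact lamGen_step (subset_lamGen S hC)
      (fun T hT => subset_lamGen S (hpi T hT C hC)) A hA
  intro A hA B hB
  exact lamGen_step hB
    (fun T hT => by rw [Set.inter_comm]; exact step1 T hT B hB) A hA

lemma lamGen_algebra {X : Type*} {S : Set (Set X)} (hu : Set.univ ∈ S)
    (hpi : ∀ A ∈ S, ∀ B ∈ S, A ∩ B ∈ S) : IsSetAlgebra0 (lamGen S) := by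
  have huniv : Set.univ ∈ lamGen S := subset_lamGen S hu
  have hcompl := (lamGen_lamClosed S).1
  have hint := lamGen_inter hpi
  have hunion : ∀ A ∈ lamGen S, ∀ B ∈ lamGen S, A ∪ B ∈ lamGen S := by
    intro A hA B hB
    have : A ∪ B = (Aᶜ ∩ Bᶜ)ᶜ := by rw [Set.compl_inter, compl_compl, compl_compl]
    rw [this]
    exact hcompl _ (hint _ (hcompl A hA) _ (hcompl B hB))
  refine ⟨⟨⟨_, huniv⟩, hunion, ?_⟩, huniv⟩
  intro A hA B hB
  rw [Set.diff_eq]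
  exact hint A hA _ (hcompl B hB)

/-- **finitely additive Dynkin lemma.** Two finitely additive probabilities on
the algebra generated by a semilattice agree on the semilattice iff they agree on the algebra. -/
theorem stmt10 {X : Type*} (𝒜₀ 𝔄 : Set (Set X))
    (hsl : IsCapSemilattice 𝒜₀ ∨ IsCupSemilattice 𝒜₀)
    (halg : IsSetAlgebra0 𝔄 ∧ 𝒜₀ ⊆ 𝔄 ∧
      ∀ B : Set (Set X), IsSetAlgebra0 B → 𝒜₀ ⊆ B → 𝔄 ⊆ B)
    (P Q : Set X → ℝ)
    (hPadd : ∀ A ∈ 𝔄, ∀ B ∈ 𝔄, Disjoint A B → P (A ∪ B) = P A + P B)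
    (hQadd : ∀ A ∈ 𝔄, ∀ B ∈ 𝔄, Disjoint A B → Q (A ∪ B) = Q A + Q B)
    (hPpos : ∀ A ∈ 𝔄, 0 ≤ P A) (hQpos : ∀ A ∈ 𝔄, 0 ≤ Q A)
    (hP0 : P ∅ = 0) (hQ0 : Q ∅ = 0)
    (hP1 : P Set.univ = 1) (hQ1 : Q Set.univ = 1) :
    (∀ A ∈ 𝒜₀, P A = Q A) ↔ (∀ A ∈ 𝔄, P A = Q A) := by
  obtain ⟨⟨⟨hne, hAunion, hAdiff⟩, hAuniv⟩, hsub, hmin⟩ := halg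
  have hcomplA : ∀ A ∈ 𝔄, Aᶜ ∈ 𝔄 := by
    intro A hA
    have := hAdiff _ hAuniv _ hA
    rwa [← Set.compl_eq_univ_diff] at this
  have hPc : ∀ A ∈ 𝔄, P Aᶜ = 1 - P A := by
    intro A hA
    have := hPadd A hA Aᶜ (hcomplA A hA) disjoint_compl_right
    rw [Set.union_compl_self, hP1] at this
    linarith
  have hQc : ∀ A ∈ 𝔄, Q Aᶜ = 1 - Q A := by
    intro A hA
    have := hQadd A hA Aᶜ (hcomplA A hA) disjoint_compl_right
    rw [Set.union_compl_self, hQ1] at this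
    linarith
  constructor
  · intro h
    set D : Set (Set X) := {A | A ∈ 𝔄 ∧ P A = Q A} with hDdef
    have hD_lam : LamClosed D := by
      constructor
      · rintro A ⟨hA, hPQ⟩
        exact ⟨hcomplA A hA, by rw [hPc A hA, hQc A hA, hPQ]⟩
      · rintro A ⟨hA, hPQA⟩ B ⟨hB, hPQB⟩ hd
        exact ⟨hAunion A hA B hB, by rw [hPadd A hA B hB hd, hQadd A hA B hB hd, hPQA, hPQB]⟩
    rcases hsl with hcap | hcup
    · -- ∩-semilattice
      set S : Set (Set X) := insert Set.univ 𝒜₀ with hSdef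
      have hu : Set.univ ∈ S := Set.mem_insert _ _
      have hpi : ∀ A ∈ S, ∀ B ∈ S, A ∩ B ∈ S := by
        intro A hA B hB
        rcases Set.mem_insert_iff.mp hA with rfl | hA <;>
          rcases Set.mem_insert_iff.mp hB with rfl | hB
        · rw [Set.univ_inter]; exact hu
        · rw [Set.univ_inter]; exact Set.mem_insert_of_mem _ hB
        · rw [Set.inter_univ]; exact Set.mem_insert_of_mem _ hA
        · exact Set.mem_insert_of_mem _ (hcap.2 A hA B hB)
      have hSD : S ⊆ D := by
        intro A hA
        rcases Set.mem_insert_iff.mp hA with rfl | hA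
        · exact ⟨hAuniv, by rw [hP1, hQ1]⟩
        · exact ⟨hsub hA, h A hA⟩
      have h1 : 𝔄 ⊆ lamGen S := by
        apply hmin
        · exact lamGen_algebra hu hpi
        · exact fun A hA => subset_lamGen S (Set.mem_insert_of_mem _ hA)
      intro A hA
      exact ((lamGen_subset hSD hD_lam) (h1 hA)).2
    · -- ∪-semilattice: take complements
      set S : Set (Set X) := insert Set.univ (compl '' 𝒜₀) with hSdef
      have hu : Set.univ ∈ S := Set.mem_insert _ _
      have hpi : ∀ A ∈ S, ∀ B ∈ S, A ∩ B ∈ S := by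
        intro A hA B hB
        rcases Set.mem_insert_iff.mp hA with rfl | ⟨A', hA', rfl⟩ <;>
          rcases Set.mem_insert_iff.mp hB with rfl | ⟨B', hB', rfl⟩
        · rw [Set.univ_inter]; exact hu
        · rw [Set.univ_inter]; exact Set.mem_insert_of_mem _ (Set.mem_image_of_mem compl hB')
        · rw [Set.inter_univ]; exact Set.mem_insert_of_mem _ (Set.mem_image_of_mem compl hA')
        · refine Set.mem_insert_of_mem _ ⟨A' ∪ B', hcup.2 A' hA' B' hB', ?_⟩
          rw [Set.compl_union]
      have hSD : S ⊆ D := by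
        intro A hA
        rcases Set.mem_insert_iff.mp hA with rfl | ⟨A', hA', rfl⟩
        · exact ⟨hAuniv, by rw [hP1, hQ1]⟩
        · exact ⟨hcomplA A' (hsub hA'),
            by rw [hPc A' (hsub hA'), hQc A' (hsub hA'), h A' hA']⟩
      have h1 : 𝔄 ⊆ lamGen S := by
        apply hmin
        · exact lamGen_algebra hu hpi
        · intro A hA
          have : Aᶜ ∈ lamGen S :=
            subset_lamGen S (Set.mem_insert_of_mem _ ⟨A, hA, rfl⟩)
          have := (lamGen_lamClosed S).1 _ this
          rwa [compl_compl] at this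
      intro A hA
      exact ((lamGen_subset hSD hD_lam) (h1 hA)).2
  · intro h A hA
    exact h A (hsub hA)
end

section
/- Let 𝒜₀ be a semilattice of subsets of a set X, Φ₀ : 𝒜₀ → ℝ semi-additive, and Φ the unique strongly additive extension of Φ₀ to the ring 𝒜 generated by 𝒜₀; write Φ₀(b) = Σᵢ cᵢ Φ₀(Aᵢ) for a simple function b = Σᵢ cᵢ 1_{Aᵢ} with Aᵢ ∈ 𝒜₀ (this is well defined). Then: (i) Φ ≥ 0 on 𝒜 if and only if sup{Φ₀(b) : b an 𝒜₀-simple function with b ≤ 0} ≤ 0; (ii) Φ is bounded on 𝒜 if and only if sup{|Φ₀(b)| : b an 𝒜₀-simple function with |b| ≤ 1} < ∞; (iii) Φ is bounded and nonnegative on 𝒜 if and only if sup{Φ₀(b) : b an 𝒜₀-simple function with b ≤ 1} < ∞. -/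
open Finset Set

/-!
Cutting finitely many sets `A₀, …, A_{N-1}` of the ring into their atoms turns `Σ cₙ Φ(Aₙ)` into
`Σ_S b_S Φ(atom S)`, where `b_S` is the value of `b = Σ cₙ 1_{Aₙ}` on the nonempty, pairwise
disjoint atom `S`; so positivity or bounds of `Φ` on the ring bound `Φ₀(b)`, and `Φ₀(b) = 0` when
`b = 0`. Conversely, every `A` in the ring has `1_A = Σ cₙ 1_{Bₙ}` with `Bₙ ∈ 𝒜₀`: the indicators
of `𝒜₀` span an algebra (on a `∪`-semilattice because `1_{B∩C} = 1_B + 1_C - 1_{B∪C}`), and the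
sets whose indicator lies in that span form a ring. Then `Φ(A) = Φ₀(Σ cₙ 1_{Bₙ})`, which carries
bounds on `Φ₀` back to `Φ`. In (iii), nonnegativity reduces to (i) by scaling: the simple
functions `≤ 0` form a cone inside those `≤ 1`.
-/

open MeasureTheory

lemma IsSetRing0.isSetRing {X : Type*} {𝒜 : Set (Set X)} (h𝒜 : IsSetRing0 𝒜) :
    IsSetRing 𝒜 where
  empty_mem := by
    obtain ⟨⟨A, hA⟩, -, hdiff⟩ := h𝒜
    simpa using hdiff A hA A hA
  union_mem _ _ hA hB := h𝒜.2.1 _ hA _ hB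
  sdiff_mem _ _ hA hB := h𝒜.2.2 _ hA _ hB

namespace StronglyAdditive

variable {X : Type*} {𝒜 : Set (Set X)} (h𝒜 : IsSetRing 𝒜)
include h𝒜

lemma map_union {Y : Type*} [AddCommGroup Y] {Φ : Set X → Y} (hΦ : StronglyAdditive 𝒜 Φ)
    {A B : Set X} (hA : A ∈ 𝒜) (hB : B ∈ 𝒜) (hAB : Disjoint A B) :
    Φ (A ∪ B) = Φ A + Φ B := by
  have h := hΦ.1 A hA B hB
  rwa [hAB.inter_eq, hΦ.2 h𝒜.empty_mem, add_zero] at h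

lemma map_biUnion {Y : Type*} [AddCommGroup Y] {Φ : Set X → Y} (hΦ : StronglyAdditive 𝒜 Φ)
    {ι : Type*} {s : Finset ι} {D : ι → Set X} (hD : ∀ i ∈ s, D i ∈ 𝒜)
    (hdisj : (s : Set ι).PairwiseDisjoint D) :
    Φ (⋃ i ∈ s, D i) = ∑ i ∈ s, Φ (D i) := by
  classical
  induction s using Finset.induction_on with
  | empty => simpa using hΦ.2 h𝒜.empty_mem
  | insert a s ha ih =>
    have hs : ∀ i ∈ s, D i ∈ 𝒜 := fun i hi => hD i (mem_insert_of_mem hi)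
    have hdisj_a : Disjoint (D a) (⋃ i ∈ s, D i) :=
      disjoint_iUnion₂_right.2 fun i hi =>
        hdisj (mem_insert_self a s) (mem_insert_of_mem hi) (ne_of_mem_of_not_mem hi ha).symm
    rw [set_biUnion_insert, sum_insert ha,
      hΦ.map_union h𝒜 (hD a (mem_insert_self a s)) (h𝒜.biUnion_mem s hs) hdisj_a,
      ih hs (hdisj.subset (by simp))]

/-- Split the family by the sign of `Φ`: each half has its union in `𝒜`, so its sum is at most
`M` in absolute value. -/
lemma sum_abs_le {Φ : Set X → ℝ} (hΦ : StronglyAdditive 𝒜 Φ) {M : ℝ}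
    (hM : ∀ B ∈ 𝒜, |Φ B| ≤ M) {ι : Type*} {s : Finset ι} {D : ι → Set X}
    (hD : ∀ i ∈ s, D i ∈ 𝒜) (hdisj : (s : Set ι).PairwiseDisjoint D) :
    ∑ i ∈ s, |Φ (D i)| ≤ 2 * M := by
  classical
  have hsub : ∀ t ⊆ s, |∑ i ∈ t, Φ (D i)| ≤ M := fun t ht => by
    rw [← hΦ.map_biUnion h𝒜 (fun i hi => hD i (ht hi)) (hdisj.subset (coe_subset.2 ht))]
    exact hM _ (h𝒜.biUnion_mem t fun i hi => hD i (ht hi))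
  have hpos : ∑ i ∈ s with 0 ≤ Φ (D i), |Φ (D i)| = ∑ i ∈ s with 0 ≤ Φ (D i), Φ (D i) :=
    sum_congr rfl fun i hi => abs_of_nonneg (mem_filter.1 hi).2
  have hneg : ∑ i ∈ s with ¬0 ≤ Φ (D i), |Φ (D i)| = -∑ i ∈ s with ¬0 ≤ Φ (D i), Φ (D i) := by
    rw [← sum_neg_distrib]
    exact sum_congr rfl fun i hi => abs_of_neg (not_le.1 (mem_filter.1 hi).2)
  rw [← sum_filter_add_sum_filter_not s (fun i => 0 ≤ Φ (D i)), hpos, hneg]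
  linarith [le_abs_self (∑ i ∈ s with 0 ≤ Φ (D i), Φ (D i)),
    neg_abs_le (∑ i ∈ s with ¬0 ≤ Φ (D i), Φ (D i)),
    hsub _ (filter_subset (fun i => 0 ≤ Φ (D i)) s),
    hsub _ (filter_subset (fun i => ¬0 ≤ Φ (D i)) s)]

end StronglyAdditive

section SimpleFunctions

variable {X : Type*}

noncomputable def simpleFun (N : ℕ) (c : ℕ → ℝ) (A : ℕ → Set X) (x : X) : ℝ :=
  ∑ n ∈ range N, c n * (A n).indicator (fun _ => 1) x

/-- The paper's `Φ(b)` for `b = simpleFun N c A`. -/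
def simpleIntegral (Φ : Set X → ℝ) (N : ℕ) (c : ℕ → ℝ) (A : ℕ → Set X) : ℝ :=
  ∑ n ∈ range N, c n * Φ (A n)

variable {N : ℕ} {c : ℕ → ℝ} {A : ℕ → Set X}

lemma simpleFun_const_mul (t : ℝ) (x : X) :
    simpleFun N (fun n => t * c n) A x = t * simpleFun N c A x := by
  simp only [simpleFun, mul_sum, mul_assoc]

lemma simpleIntegral_const_mul (Φ : Set X → ℝ) (t : ℝ) :
    simpleIntegral Φ N (fun n => t * c n) A = t * simpleIntegral Φ N c A := by
  simp only [simpleIntegral, mul_sum, mul_assoc]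

lemma simpleIntegral_congr {Φ Ψ : Set X → ℝ} (h : ∀ n ∈ range N, Φ (A n) = Ψ (A n)) :
    simpleIntegral Φ N c A = simpleIntegral Ψ N c A :=
  sum_congr rfl fun n hn => by rw [h n hn]

lemma sum_range_succ_update {α : Type*} (B : ℕ → α) (a : ℝ) (C : α) (g : α → ℝ) :
    ∑ n ∈ range (N + 1), Function.update c N a n * g (Function.update B N C n) =
      ∑ n ∈ range N, c n * g (B n) + a * g C := by
  rw [sum_range_succ, Function.update_self, Function.update_self]
  congr 1
  refine sum_congr rfl fun n hn => ?_
  rw [Function.update_of_ne (mem_range.1 hn).ne, Function.update_of_ne (mem_range.1 hn).ne]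

lemma simpleIntegral_nonpos_of_bddAbove {𝒜₀ : Set (Set X)} {Φ₀ : Set X → ℝ} {M : ℝ}
    (h : ∀ (N : ℕ) c A, (∀ n ∈ range N, A n ∈ 𝒜₀) → (∀ x, simpleFun N c A x ≤ 1) →
      simpleIntegral Φ₀ N c A ≤ M)
    (hA : ∀ n ∈ range N, A n ∈ 𝒜₀) (hf : ∀ x, simpleFun N c A x ≤ 0) :
    simpleIntegral Φ₀ N c A ≤ 0 := by
  by_contra! hpos
  set t := (|M| + 1) / simpleIntegral Φ₀ N c A
  have ht : 0 < t := by positivity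
  have hle := h N (fun n => t * c n) A hA fun x => by
    rw [simpleFun_const_mul]
    nlinarith [hf x]
  rw [simpleIntegral_const_mul, div_mul_cancel₀ _ hpos.ne'] at hle
  linarith [le_abs_self M]

end SimpleFunctions

section Atoms

variable {X : Type*} (A : ℕ → Set X) (N : ℕ)

open scoped Classical in
noncomputable def atomIndex (x : X) : Finset ℕ := {n ∈ range N | x ∈ A n}

def atom (S : Finset ℕ) : Set X := atomIndex A N ⁻¹' {S}

open scoped Classical in
/-- The indices of the nonempty atoms contained in `⋃ₙ Aₙ`. -/
noncomputable def atomIndices : Finset (Finset ℕ) :=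
  {S ∈ (range N).powerset | S.Nonempty ∧ ∃ x, atomIndex A N x = S}

variable {A N}

lemma mem_atomIndex {x : X} {n : ℕ} : n ∈ atomIndex A N x ↔ n ∈ range N ∧ x ∈ A n := by
  classical exact Finset.mem_filter

lemma mem_atomIndices {S : Finset ℕ} :
    S ∈ atomIndices A N ↔ S ⊆ range N ∧ S.Nonempty ∧ ∃ x, atomIndex A N x = S := by
  classical simp only [atomIndices, Finset.mem_filter, Finset.mem_powerset]

lemma atomIndex_mem_atomIndices {x : X} {n : ℕ} (hn : n ∈ range N) (hx : x ∈ A n) :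
    atomIndex A N x ∈ atomIndices A N :=
  mem_atomIndices.2 ⟨fun _ hm => (mem_atomIndex.1 hm).1, ⟨n, mem_atomIndex.2 ⟨hn, hx⟩⟩, x, rfl⟩

lemma atom_eq_sdiff {S : Finset ℕ} (hS : S ⊆ range N) :
    atom A N S = (⋂ n ∈ S, A n) \ ⋃ n ∈ range N \ S, A n := by
  ext x
  simp only [atom, Set.mem_preimage, Set.mem_singleton_iff, Finset.ext_iff, mem_atomIndex,
    Set.mem_sdiff, Set.mem_iInter, Set.mem_iUnion, Finset.mem_sdiff, not_exists]
  constructor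
  · intro h
    exact ⟨fun n hn => ((h n).2 hn).2, fun n ⟨hn, hnS⟩ hx => hnS ((h n).1 ⟨hn, hx⟩)⟩
  · rintro ⟨hin, hout⟩ n
    exact ⟨fun ⟨hn, hx⟩ => by_contra fun hnS => hout n ⟨hn, hnS⟩ hx,
      fun hnS => ⟨hS hnS, hin n hnS⟩⟩

lemma atom_mem {𝒜 : Set (Set X)} (h𝒜 : IsSetRing 𝒜) (hA : ∀ n ∈ range N, A n ∈ 𝒜)
    {S : Finset ℕ} (hS : S ∈ atomIndices A N) : atom A N S ∈ 𝒜 := by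
  obtain ⟨hSN, hSne, -⟩ := mem_atomIndices.1 hS
  rw [atom_eq_sdiff hSN]
  exact h𝒜.sdiff_mem (h𝒜.biInter_mem S hSne fun n hn => hA n (hSN hn))
    (h𝒜.biUnion_mem _ fun n hn => hA n (Finset.mem_sdiff.1 hn).1)

lemma pairwiseDisjoint_atom (s : Set (Finset ℕ)) : s.PairwiseDisjoint (atom A N) :=
  pairwiseDisjoint_fiber _ s

lemma biUnion_atom {n : ℕ} (hn : n ∈ range N) [DecidablePred fun S : Finset ℕ => n ∈ S] :
    ⋃ S ∈ {S ∈ atomIndices A N | n ∈ S}, atom A N S = A n := by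
  ext x
  simp only [Set.mem_iUnion, Finset.mem_filter, atom, Set.mem_preimage, Set.mem_singleton_iff,
    exists_prop]
  constructor
  · rintro ⟨S, ⟨-, hnS⟩, rfl⟩
    exact (mem_atomIndex.1 hnS).2
  · intro hx
    exact ⟨_, ⟨atomIndex_mem_atomIndices hn hx, mem_atomIndex.2 ⟨hn, hx⟩⟩, rfl⟩

lemma simpleFun_eq_sum_atomIndex (c : ℕ → ℝ) (x : X) :
    simpleFun N c A x = ∑ n ∈ atomIndex A N x, c n := by
  classical
  rw [simpleFun, atomIndex, sum_filter]
  refine sum_congr rfl fun n _ => ?_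
  by_cases hx : x ∈ A n <;> simp [hx]

lemma exists_simpleFun_eq {S : Finset ℕ} (hS : S ∈ atomIndices A N) (c : ℕ → ℝ) :
    ∃ x, simpleFun N c A x = ∑ n ∈ S, c n := by
  obtain ⟨-, -, x, rfl⟩ := mem_atomIndices.1 hS
  exact ⟨x, simpleFun_eq_sum_atomIndex c x⟩

end Atoms

section Decomposition

variable {X : Type*} {𝒜 : Set (Set X)} {Φ : Set X → ℝ} {N : ℕ} {A : ℕ → Set X}
  (h𝒜 : IsSetRing 𝒜) (hΦ : StronglyAdditive 𝒜 Φ) (hA : ∀ n ∈ range N, A n ∈ 𝒜) (c : ℕ → ℝ)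
include h𝒜 hΦ hA

lemma simpleIntegral_eq_sum_atoms :
    simpleIntegral Φ N c A = ∑ S ∈ atomIndices A N, (∑ n ∈ S, c n) * Φ (atom A N S) := by
  classical
  have hAn : ∀ n ∈ range N,
      c n * Φ (A n) = ∑ S ∈ atomIndices A N, if n ∈ S then c n * Φ (atom A N S) else 0 := by
    intro n hn
    rw [← biUnion_atom (A := A) hn,
      hΦ.map_biUnion h𝒜 (fun S hS => atom_mem h𝒜 hA (mem_filter.1 hS).1)
        (pairwiseDisjoint_atom _), mul_sum, sum_filter]
  rw [simpleIntegral, sum_congr rfl hAn, sum_comm]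
  refine sum_congr rfl fun S hS => ?_
  rw [sum_ite_mem, Finset.inter_eq_right.2 (mem_atomIndices.1 hS).1, sum_mul]

lemma simpleIntegral_nonpos (hpos : ∀ B ∈ 𝒜, 0 ≤ Φ B) (hf : ∀ x, simpleFun N c A x ≤ 0) :
    simpleIntegral Φ N c A ≤ 0 := by
  rw [simpleIntegral_eq_sum_atoms h𝒜 hΦ hA]
  refine sum_nonpos fun S hS => ?_
  obtain ⟨x, hx⟩ := exists_simpleFun_eq hS c
  exact mul_nonpos_of_nonpos_of_nonneg (hx ▸ hf x) (hpos _ (atom_mem h𝒜 hA hS))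

lemma simpleIntegral_eq_zero (hf : ∀ x, simpleFun N c A x = 0) : simpleIntegral Φ N c A = 0 := by
  rw [simpleIntegral_eq_sum_atoms h𝒜 hΦ hA]
  refine sum_eq_zero fun S hS => ?_
  obtain ⟨x, hx⟩ := exists_simpleFun_eq hS c
  rw [← hx, hf x, zero_mul]

lemma simpleIntegral_le_of_le_one (hpos : ∀ B ∈ 𝒜, 0 ≤ Φ B) {M : ℝ} (hM : ∀ B ∈ 𝒜, Φ B ≤ M)
    (hf : ∀ x, simpleFun N c A x ≤ 1) : simpleIntegral Φ N c A ≤ M := by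
  have hatoms : ∀ S ∈ atomIndices A N, atom A N S ∈ 𝒜 := fun S hS => atom_mem h𝒜 hA hS
  calc simpleIntegral Φ N c A = ∑ S ∈ atomIndices A N, (∑ n ∈ S, c n) * Φ (atom A N S) :=
        simpleIntegral_eq_sum_atoms h𝒜 hΦ hA c
    _ ≤ ∑ S ∈ atomIndices A N, Φ (atom A N S) := sum_le_sum fun S hS => by
        obtain ⟨x, hx⟩ := exists_simpleFun_eq hS c
        exact mul_le_of_le_one_left (hpos _ (hatoms S hS)) (hx ▸ hf x)
    _ = Φ (⋃ S ∈ atomIndices A N, atom A N S) :=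
        (hΦ.map_biUnion h𝒜 hatoms (pairwiseDisjoint_atom _)).symm
    _ ≤ M := hM _ (h𝒜.biUnion_mem _ hatoms)

lemma abs_simpleIntegral_le_of_abs_le_one {M : ℝ} (hM : ∀ B ∈ 𝒜, |Φ B| ≤ M)
    (hf : ∀ x, |simpleFun N c A x| ≤ 1) : |simpleIntegral Φ N c A| ≤ 2 * M := by
  have hatoms : ∀ S ∈ atomIndices A N, atom A N S ∈ 𝒜 := fun S hS => atom_mem h𝒜 hA hS
  calc |simpleIntegral Φ N c A|
      = |∑ S ∈ atomIndices A N, (∑ n ∈ S, c n) * Φ (atom A N S)| := by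
        rw [simpleIntegral_eq_sum_atoms h𝒜 hΦ hA]
    _ ≤ ∑ S ∈ atomIndices A N, |(∑ n ∈ S, c n) * Φ (atom A N S)| := abs_sum_le_sum_abs _ _
    _ ≤ ∑ S ∈ atomIndices A N, |Φ (atom A N S)| := sum_le_sum fun S hS => by
        obtain ⟨x, hx⟩ := exists_simpleFun_eq hS c
        rw [abs_mul]
        exact mul_le_of_le_one_left (abs_nonneg _) (hx ▸ hf x)
    _ ≤ 2 * M := hΦ.sum_abs_le h𝒜 hM hatoms (pairwiseDisjoint_atom _)

end Decomposition

section IndicatorSpan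

variable {X : Type*} {𝒜₀ : Set (Set X)}

noncomputable def indicatorSpan (𝒜₀ : Set (Set X)) : Submodule ℝ (X → ℝ) :=
  Submodule.span ℝ ((fun B => B.indicator 1) '' 𝒜₀)

variable (hsl : IsCapSemilattice 𝒜₀ ∨ IsCupSemilattice 𝒜₀)
include hsl

open scoped Pointwise in
lemma mul_mem_indicatorSpan {f g : X → ℝ} (hf : f ∈ indicatorSpan 𝒜₀)
    (hg : g ∈ indicatorSpan 𝒜₀) : f * g ∈ indicatorSpan 𝒜₀ := by
  have hgen : (fun B => B.indicator 1) '' 𝒜₀ * (fun B => B.indicator 1) '' 𝒜₀ ⊆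
      (indicatorSpan 𝒜₀ : Set (X → ℝ)) := by
    rintro _ ⟨_, ⟨B, hB, rfl⟩, _, ⟨C, hC, rfl⟩, rfl⟩
    change B.indicator 1 * C.indicator 1 ∈ indicatorSpan 𝒜₀
    rw [← inter_indicator_one]
    rcases hsl with hcap | hcup
    · exact Submodule.subset_span ⟨_, hcap.2 B hB C hC, rfl⟩
    · rw [eq_sub_of_add_eq' (indicator_union_add_inter (1 : X → ℝ) B C)]
      exact sub_mem (add_mem (Submodule.subset_span ⟨B, hB, rfl⟩)
        (Submodule.subset_span ⟨C, hC, rfl⟩)) (Submodule.subset_span ⟨_, hcup.2 B hB C hC, rfl⟩)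
  have hfg := Submodule.mul_mem_mul hf hg
  rw [indicatorSpan, Submodule.span_mul_span] at hfg
  exact Submodule.span_le.2 hgen hfg

lemma indicator_mem_indicatorSpan {𝒜 : Set (Set X)}
    (hmin : ∀ R : Set (Set X), IsSetRing0 R → 𝒜₀ ⊆ R → 𝒜 ⊆ R) {A : Set X} (hA : A ∈ 𝒜) :
    A.indicator 1 ∈ indicatorSpan 𝒜₀ := by
  have hsub : 𝒜₀ ⊆ {B | B.indicator 1 ∈ indicatorSpan 𝒜₀} :=
    fun B hB => Submodule.subset_span ⟨B, hB, rfl⟩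
  have hinter : ∀ B C : Set X, B.indicator 1 ∈ indicatorSpan 𝒜₀ →
      C.indicator 1 ∈ indicatorSpan 𝒜₀ → (B ∩ C).indicator 1 ∈ indicatorSpan 𝒜₀ :=
    fun B C hB hC => by rw [inter_indicator_one]; exact mul_mem_indicatorSpan hsl hB hC
  refine hmin _ ⟨(hsl.elim (·.1) (·.1)).mono hsub, fun B hB C hC => ?_, fun B hB C hC => ?_⟩
    hsub hA
  · change (B ∪ C).indicator 1 ∈ indicatorSpan 𝒜₀
    rw [eq_sub_of_add_eq (indicator_union_add_inter (1 : X → ℝ) B C)]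
    exact sub_mem (add_mem hB hC) (hinter B C hB hC)
  · change (B \ C).indicator 1 ∈ indicatorSpan 𝒜₀
    rw [← sdiff_self_inter, indicator_sdiff Set.inter_subset_left]
    exact sub_mem hB (hinter B C hB hC)

lemma exists_simpleFun_eq_indicator {𝒜 : Set (Set X)}
    (hmin : ∀ R : Set (Set X), IsSetRing0 R → 𝒜₀ ⊆ R → 𝒜 ⊆ R) {A : Set X} (hA : A ∈ 𝒜) :
    ∃ (N : ℕ) (c : ℕ → ℝ) (B : ℕ → Set X), (∀ n ∈ range N, B n ∈ 𝒜₀) ∧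
      ∀ x, simpleFun N c B x = A.indicator (fun _ => 1) x := by
  obtain ⟨N, f, g, hfg⟩ :=
    Submodule.mem_span_set'.1 (indicator_mem_indicatorSpan hsl hmin hA)
  choose B hB hgB using fun i => (g i).2
  refine ⟨N, fun n => if h : n < N then f ⟨n, h⟩ else 0,
    fun n => if h : n < N then B ⟨n, h⟩ else ∅,
    fun n hn => by simpa [mem_range.1 hn] using hB _, fun x => ?_⟩
  change _ = A.indicator 1 x
  rw [← hfg, simpleFun, ← Fin.sum_univ_eq_sum_range]
  simp only [Fin.is_lt, dite_true, Fin.eta, Finset.sum_apply, Pi.smul_apply, smul_eq_mul,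
    ← hgB]
  rfl

end IndicatorSpan

section Characterization

variable {X : Type*} {𝒜₀ 𝒜 : Set (Set X)} {Φ₀ Φ : Set X → ℝ}

lemma simpleFun_update (N : ℕ) (c : ℕ → ℝ) (B : ℕ → Set X) (a : ℝ) (A : Set X) (x : X) :
    simpleFun (N + 1) (Function.update c N a) (Function.update B N A) x =
      simpleFun N c B x + a * A.indicator (fun _ => 1) x :=
  sum_range_succ_update B a A fun C => C.indicator (fun _ => 1) x

lemma simpleIntegral_update (N : ℕ) (c : ℕ → ℝ) (B : ℕ → Set X) (a : ℝ) (A : Set X) :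
    simpleIntegral Φ (N + 1) (Function.update c N a) (Function.update B N A) =
      simpleIntegral Φ N c B + a * Φ A :=
  sum_range_succ_update B a A Φ

/-- Appending `A` with coefficient `-1` gives a simple function vanishing identically. -/
lemma map_eq_simpleIntegral (h𝒜 : IsSetRing 𝒜) (hΦ : StronglyAdditive 𝒜 Φ) {A : Set X}
    (hA : A ∈ 𝒜) {N : ℕ} {c : ℕ → ℝ} {B : ℕ → Set X} (hB : ∀ n ∈ range N, B n ∈ 𝒜)
    (hf : ∀ x, simpleFun N c B x = A.indicator (fun _ => 1) x) :
    Φ A = simpleIntegral Φ N c B := by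
  have hB' : ∀ n ∈ range (N + 1), Function.update B N A n ∈ 𝒜 := by
    intro n hn
    rcases eq_or_ne n N with rfl | hne
    · rwa [Function.update_self]
    · rw [Function.update_of_ne hne]
      exact hB n (mem_range.2 (lt_of_le_of_ne (Nat.lt_succ_iff.1 (mem_range.1 hn)) hne))
  have hzero := simpleIntegral_eq_zero h𝒜 hΦ hB' (Function.update c N (-1)) fun x => by
    rw [simpleFun_update, hf]
    ring
  rw [simpleIntegral_update] at hzero
  linarith

variable (hsl : IsCapSemilattice 𝒜₀ ∨ IsCupSemilattice 𝒜₀) (h𝒜 : IsSetRing 𝒜) (h𝒜₀ : 𝒜₀ ⊆ 𝒜)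
  (hmin : ∀ R : Set (Set X), IsSetRing0 R → 𝒜₀ ⊆ R → 𝒜 ⊆ R)
  (hΦ : StronglyAdditive 𝒜 Φ) (hext : ∀ A ∈ 𝒜₀, Φ A = Φ₀ A)
include hsl h𝒜 h𝒜₀ hmin hΦ hext

lemma exists_simpleIntegral_eq {A : Set X} (hA : A ∈ 𝒜) :
    ∃ (N : ℕ) (c : ℕ → ℝ) (B : ℕ → Set X), (∀ n ∈ range N, B n ∈ 𝒜₀) ∧
      (∀ x, simpleFun N c B x = A.indicator (fun _ => 1) x) ∧ Φ A = simpleIntegral Φ₀ N c B := by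
  obtain ⟨N, c, B, hB, hf⟩ := exists_simpleFun_eq_indicator hsl hmin hA
  refine ⟨N, c, B, hB, hf, ?_⟩
  rw [map_eq_simpleIntegral h𝒜 hΦ hA (fun n hn => h𝒜₀ (hB n hn)) hf]
  exact simpleIntegral_congr fun n hn => hext _ (hB n hn)

lemma nonneg_iff_simpleIntegral_nonpos :
    (∀ A ∈ 𝒜, 0 ≤ Φ A) ↔ ∀ (N : ℕ) (c : ℕ → ℝ) (A : ℕ → Set X), (∀ n ∈ range N, A n ∈ 𝒜₀) →
      (∀ x, simpleFun N c A x ≤ 0) → simpleIntegral Φ₀ N c A ≤ 0 := by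
  refine ⟨fun hpos N c A hA hf => ?_, fun h A hA => ?_⟩
  · rw [← simpleIntegral_congr fun n hn => hext _ (hA n hn)]
    exact simpleIntegral_nonpos h𝒜 hΦ (fun n hn => h𝒜₀ (hA n hn)) c hpos hf
  · obtain ⟨N, c, B, hB, hf, hΦA⟩ := exists_simpleIntegral_eq hsl h𝒜 h𝒜₀ hmin hΦ hext hA
    have hneg := h N (fun n => -1 * c n) B hB fun x => by
      rw [simpleFun_const_mul, hf]
      linarith [indicator_nonneg (s := A) (fun _ _ => zero_le_one (α := ℝ)) x]
    rw [simpleIntegral_const_mul, ← hΦA] at hneg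
    linarith

lemma bounded_iff_abs_simpleIntegral_bounded :
    (∃ M, ∀ A ∈ 𝒜, |Φ A| ≤ M) ↔ ∃ M, ∀ (N : ℕ) (c : ℕ → ℝ) (A : ℕ → Set X),
      (∀ n ∈ range N, A n ∈ 𝒜₀) → (∀ x, |simpleFun N c A x| ≤ 1) →
        |simpleIntegral Φ₀ N c A| ≤ M := by
  refine ⟨fun ⟨M, hM⟩ => ⟨2 * M, fun N c A hA hf => ?_⟩, fun ⟨M, h⟩ => ⟨M, fun A hA => ?_⟩⟩
  · rw [← simpleIntegral_congr fun n hn => hext _ (hA n hn)]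
    exact abs_simpleIntegral_le_of_abs_le_one h𝒜 hΦ (fun n hn => h𝒜₀ (hA n hn)) c hM hf
  · obtain ⟨N, c, B, hB, hf, hΦA⟩ := exists_simpleIntegral_eq hsl h𝒜 h𝒜₀ hmin hΦ hext hA
    rw [hΦA]
    refine h N c B hB fun x => ?_
    rw [hf, abs_of_nonneg (indicator_nonneg (fun _ _ => zero_le_one) x)]
    exact indicator_le_self' (fun _ _ => zero_le_one) x

lemma nonneg_and_bounded_iff_simpleIntegral_bddAbove :
    ((∀ A ∈ 𝒜, 0 ≤ Φ A) ∧ ∃ M, ∀ A ∈ 𝒜, |Φ A| ≤ M) ↔ ∃ M, ∀ (N : ℕ) (c : ℕ → ℝ)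
      (A : ℕ → Set X), (∀ n ∈ range N, A n ∈ 𝒜₀) → (∀ x, simpleFun N c A x ≤ 1) →
        simpleIntegral Φ₀ N c A ≤ M := by
  refine ⟨fun ⟨hpos, M, hM⟩ => ⟨M, fun N c A hA hf => ?_⟩, fun ⟨M, h⟩ => ?_⟩
  · rw [← simpleIntegral_congr fun n hn => hext _ (hA n hn)]
    exact simpleIntegral_le_of_le_one h𝒜 hΦ (fun n hn => h𝒜₀ (hA n hn)) c hpos
      (fun B hB => (le_abs_self _).trans (hM B hB)) hf
  have hpos := (nonneg_iff_simpleIntegral_nonpos hsl h𝒜 h𝒜₀ hmin hΦ hext).2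
    fun N c A hA hf => simpleIntegral_nonpos_of_bddAbove h hA hf
  refine ⟨hpos, M, fun A hA => ?_⟩
  obtain ⟨N, c, B, hB, hf, hΦA⟩ := exists_simpleIntegral_eq hsl h𝒜 h𝒜₀ hmin hΦ hext hA
  rw [abs_of_nonneg (hpos A hA), hΦA]
  exact h N c B hB fun x => (hf x).trans_le (indicator_le_self' (fun _ _ => zero_le_one) x)

end Characterization

theorem stmt11_general {X : Type*} (𝒜₀ 𝒜 : Set (Set X))
    (hsl : IsCapSemilattice 𝒜₀ ∨ IsCupSemilattice 𝒜₀)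
    (Φ₀ Φ : Set X → ℝ)
    (hring : IsSetRing0 𝒜 ∧ 𝒜₀ ⊆ 𝒜 ∧
      ∀ R : Set (Set X), IsSetRing0 R → 𝒜₀ ⊆ R → 𝒜 ⊆ R)
    (hΦ : StronglyAdditive 𝒜 Φ)
    (hext : ∀ A ∈ 𝒜₀, Φ A = Φ₀ A) :
    ((∀ A ∈ 𝒜, 0 ≤ Φ A) ↔
      ∀ (N : ℕ) (c : ℕ → ℝ) (A : ℕ → Set X),
        (∀ n ∈ Finset.range N, A n ∈ 𝒜₀) →
        (∀ x : X, ∑ n ∈ Finset.range N, c n * (A n).indicator (fun _ => (1 : ℝ)) x ≤ 0) →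
        ∑ n ∈ Finset.range N, c n * Φ₀ (A n) ≤ 0) ∧
    ((∃ M : ℝ, ∀ A ∈ 𝒜, |Φ A| ≤ M) ↔
      ∃ M : ℝ, ∀ (N : ℕ) (c : ℕ → ℝ) (A : ℕ → Set X),
        (∀ n ∈ Finset.range N, A n ∈ 𝒜₀) →
        (∀ x : X, |∑ n ∈ Finset.range N, c n * (A n).indicator (fun _ => (1 : ℝ)) x| ≤ 1) →
        |∑ n ∈ Finset.range N, c n * Φ₀ (A n)| ≤ M) ∧
    (((∀ A ∈ 𝒜, 0 ≤ Φ A) ∧ ∃ M : ℝ, ∀ A ∈ 𝒜, |Φ A| ≤ M) ↔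
      ∃ M : ℝ, ∀ (N : ℕ) (c : ℕ → ℝ) (A : ℕ → Set X),
        (∀ n ∈ Finset.range N, A n ∈ 𝒜₀) →
        (∀ x : X, ∑ n ∈ Finset.range N, c n * (A n).indicator (fun _ => (1 : ℝ)) x ≤ 1) →
        ∑ n ∈ Finset.range N, c n * Φ₀ (A n) ≤ M) := by
  obtain ⟨h𝒜, h𝒜₀, hmin⟩ := hring
  exact ⟨nonneg_iff_simpleIntegral_nonpos hsl h𝒜.isSetRing h𝒜₀ hmin hΦ hext,
    bounded_iff_abs_simpleIntegral_bounded hsl h𝒜.isSetRing h𝒜₀ hmin hΦ hext,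
    nonneg_and_bounded_iff_simpleIntegral_bddAbove hsl h𝒜.isSetRing h𝒜₀ hmin hΦ hext⟩

/-- Positivity and boundedness of the strongly additive extension `Φ` of a
semi-additive real-valued `Φ₀`, characterized through the values of `Φ₀` on `𝒜₀`-simple
functions (`Φ₀(Σ cᵢ 1_{Aᵢ}) = Σ cᵢ Φ₀(Aᵢ)`). -/
theorem stmt11 {X : Type*} (𝒜₀ 𝒜 : Set (Set X))
    (hsl : IsCapSemilattice 𝒜₀ ∨ IsCupSemilattice 𝒜₀)
    (Φ₀ Φ : Set X → ℝ)
    (hsa : SemiAdditive 𝒜₀ Φ₀)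
    (hring : IsSetRing0 𝒜 ∧ 𝒜₀ ⊆ 𝒜 ∧
      ∀ R : Set (Set X), IsSetRing0 R → 𝒜₀ ⊆ R → 𝒜 ⊆ R)
    (hΦ : StronglyAdditive 𝒜 Φ)
    (hext : ∀ A ∈ 𝒜₀, Φ A = Φ₀ A) :
    ((∀ A ∈ 𝒜, 0 ≤ Φ A) ↔
      ∀ (N : ℕ) (c : ℕ → ℝ) (A : ℕ → Set X),
        (∀ n ∈ Finset.range N, A n ∈ 𝒜₀) →
        (∀ x : X, ∑ n ∈ Finset.range N, c n * (A n).indicator (fun _ => (1 : ℝ)) x ≤ 0) →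
        ∑ n ∈ Finset.range N, c n * Φ₀ (A n) ≤ 0) ∧
    ((∃ M : ℝ, ∀ A ∈ 𝒜, |Φ A| ≤ M) ↔
      ∃ M : ℝ, ∀ (N : ℕ) (c : ℕ → ℝ) (A : ℕ → Set X),
        (∀ n ∈ Finset.range N, A n ∈ 𝒜₀) →
        (∀ x : X, |∑ n ∈ Finset.range N, c n * (A n).indicator (fun _ => (1 : ℝ)) x| ≤ 1) →
        |∑ n ∈ Finset.range N, c n * Φ₀ (A n)| ≤ M) ∧
    (((∀ A ∈ 𝒜, 0 ≤ Φ A) ∧ ∃ M : ℝ, ∀ A ∈ 𝒜, |Φ A| ≤ M) ↔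
      ∃ M : ℝ, ∀ (N : ℕ) (c : ℕ → ℝ) (A : ℕ → Set X),
        (∀ n ∈ Finset.range N, A n ∈ 𝒜₀) →
        (∀ x : X, ∑ n ∈ Finset.range N, c n * (A n).indicator (fun _ => (1 : ℝ)) x ≤ 1) →
        ∑ n ∈ Finset.range N, c n * Φ₀ (A n) ≤ M) :=
  stmt11_general 𝒜₀ 𝒜 hsl Φ₀ Φ hring hΦ hext
end

section
/- Let X be a partially ordered set in which every pair of elements has an infimum (a ∧-semilattice), write ⟨x,→⟩ = {x' ∈ X : x' > x} for the strict up-set of x, and assume the property: ⟨x,→⟩ ⊆ ⟨x',→⟩ implies x ≥ x'. Then for any x₁,…,x_N, y₁,…,y_K ∈ X, the inclusion ⋃_{n=1}^N ⟨x_n,→⟩ ⊆ ⋃_{k=1}^K ⟨y_k,→⟩ implies ⋀_{n=1}^N x_n ≥ ⋀_{k=1}^K y_k, and equivalently ⟨⋀_{n=1}^N x_n,→⟩ ⊆ ⟨⋀_{k=1}^K y_k,→⟩. -/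
open Finset Set

/-- In a `∧`-semilattice in which `Ioi x ⊆ Ioi x'` implies `x' ≤ x`,
an inclusion of finite unions of strict up-sets yields the corresponding inequality of the
infima, and the corresponding inclusion of strict up-sets of the infima. -/
theorem stmt14 {X : Type*} [SemilatticeInf X]
    (horder : ∀ x x' : X, Set.Ioi x ⊆ Set.Ioi x' → x' ≤ x)
    (N K : ℕ) (hN : N ≠ 0) (hK : K ≠ 0) (x y : ℕ → X)
    (h : (⋃ n ∈ Finset.range N, Set.Ioi (x n)) ⊆ ⋃ k ∈ Finset.range K, Set.Ioi (y k)) :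
    (Finset.range K).inf' (Finset.nonempty_range_iff.mpr hK) y ≤
      (Finset.range N).inf' (Finset.nonempty_range_iff.mpr hN) x ∧
    Set.Ioi ((Finset.range N).inf' (Finset.nonempty_range_iff.mpr hN) x) ⊆
      Set.Ioi ((Finset.range K).inf' (Finset.nonempty_range_iff.mpr hK) y) := by
  have key : (Finset.range K).inf' (Finset.nonempty_range_iff.mpr hK) y ≤
      (Finset.range N).inf' (Finset.nonempty_range_iff.mpr hN) x := by
    apply Finset.le_inf'
    intro n hn
    apply horder
    intro z hz
    have hz' : z ∈ ⋃ k ∈ Finset.range K, Set.Ioi (y k) := by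
      apply h
      exact Set.mem_biUnion hn hz
    rcases Set.mem_iUnion₂.1 hz' with ⟨k, hk, hzk⟩
    exact lt_of_le_of_lt (Finset.inf'_le _ hk) hzk
  exact ⟨key, fun z hz => lt_of_le_of_lt key hz⟩
end
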